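/- arXiv:1304.1236 — 2 statements merged into one kernel-verified Lean document; each statement's English description precedes it below -/
import Mathlib

section
/- (Commutative central limit theorem.) Let (A, φ) be an algebraic probability space and b ∈ A a self-adjoint element with φ(b) = 0 and φ(b²) = 1. For N ≥ 1 let b(i) = 1⊗…⊗b⊗…⊗1 ∈ A^{⊗N} (b at the i-th tensor factor) and b^{(N,1)} = Σ_{i=1}^N b(i). Then b^{(N,1)}/√N converges in moments to a standard Gaussian random variable: for every integer m ≥ 1, lim_{N→∞} φ^{⊗N}( (b^{(N,1)}/√N)^m ) equals the m-th moment of N(0,1), namely 0 if m is odd and (2k)!/(2^k k!) if m = 2k is even. -/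
open scoped TensorProduct ComplexOrder
open Filter Topology

noncomputable section

/-- The product state `φ^{⊗N}` on the `N`-fold algebraic tensor power `A^{⊗N}`,
determined by `φ^{⊗N}(a_1 ⊗ ⋯ ⊗ a_N) = φ(a_1) ⋯ φ(a_N)`. -/
def prodState {A : Type*} [Ring A] [Algebra ℂ A] (φ : A →ₗ[ℂ] ℂ) (N : ℕ) :
    (⨂[ℂ] _ : Fin N, A) →ₗ[ℂ] ℂ :=
  PiTensorProduct.lift ((MultilinearMap.mkPiAlgebra ℂ (Fin N) ℂ).compLinearMap fun _ => φ)

/-- `b(i) = 1 ⊗ ⋯ ⊗ b ⊗ ⋯ ⊗ 1 ∈ A^{⊗N}` with `b` at the `i`-th tensor factor. -/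
def elemAt {A : Type*} [Ring A] [Algebra ℂ A] (b : A) (N : ℕ) (i : Fin N) :
    ⨂[ℂ] _ : Fin N, A :=
  PiTensorProduct.tprod ℂ (Function.update (fun _ => (1 : A)) i b)

/-- `b^{(N,n)} = ∑_{1 ≤ i_1 < ⋯ < i_n ≤ N} b(i_1) ⋯ b(i_n)` (and `b^{(N,0)} = 1`). -/
def bPow {A : Type*} [Ring A] [Algebra ℂ A] (b : A) (N n : ℕ) : ⨂[ℂ] _ : Fin N, A :=
  ∑ s ∈ Finset.powersetCard n (Finset.univ : Finset (Fin N)),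
    ((s.sort (· ≤ ·)).map (elemAt b N)).prod

/-- `F^{(N,n)}(y)`: the sum, over all ways to choose `n` distinct tensor positions and
to place `y` at one of them and `b` at the other `n - 1` (with `1` elsewhere), of the
corresponding elementary tensors. -/
def Fsum {A : Type*} [Ring A] [Algebra ℂ A] (b y : A) (N n : ℕ) : ⨂[ℂ] _ : Fin N, A :=
  ∑ s ∈ Finset.powersetCard n (Finset.univ : Finset (Fin N)), ∑ i ∈ s,
    PiTensorProduct.tprod ℂ (fun j => if j = i then y else if j ∈ s then b else 1)

/-!
Expanding `(∑ i, b(i))^m` over all maps `f : Fin m → Fin N` gives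
`φ^{⊗N}((∑ i, b(i))^m) = ∑_f ∏_v φ(b^{|f⁻¹(v)|})`. Maps with a fiber of size one contribute `0`
since `φ(b) = 0`, and maps all of whose fibers have size `0` or `2` (pairings) contribute `1`
since `φ(b²) = 1`; there are `(2k)!/(2^k k!) · N(N-1)⋯(N-k+1)` pairings when `m = 2k` and none
when `m` is odd. Every remaining map has some fiber of size at least `3`, hence an image of size
at most `(m-1)/2`, so these maps number `O(N^{(m-1)/2})` and vanish after division by `N^{m/2}`.
-/
open Finset

section Fibers

variable {ι κ : Type*} [Fintype ι] [DecidableEq κ]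

def fiberCard (f : ι → κ) (v : κ) : ℕ := #{j | f j = v}

def IsPairing (f : ι → κ) : Prop := ∀ v, fiberCard f v = 0 ∨ fiberCard f v = 2

instance [Fintype κ] (f : ι → κ) : Decidable (IsPairing f) :=
  inferInstanceAs (Decidable (∀ v, fiberCard f v = 0 ∨ fiberCard f v = 2))

lemma fiberCard_ne_zero_iff {f : ι → κ} {v : κ} : fiberCard f v ≠ 0 ↔ v ∈ univ.image f := by
  simp [fiberCard, Finset.card_eq_zero, Finset.filter_eq_empty_iff]

lemma fiberCard_le (f : ι → κ) (v : κ) : fiberCard f v ≤ Fintype.card ι :=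
  card_filter_le _ _

lemma sum_fiberCard [Fintype κ] (f : ι → κ) : ∑ v, fiberCard f v = Fintype.card ι :=
  (card_eq_sum_card_fiberwise fun _ _ => mem_univ _).symm

lemma IsPairing.even_card [Fintype κ] {f : ι → κ} (hf : IsPairing f) :
    Even (Fintype.card ι) := by
  rw [← sum_fiberCard f]
  exact even_sum _ fun v _ => by rcases hf v with h | h <;> simp [h]

lemma two_mul_card_image_lt_of_not_isPairing {f : ι → κ} (h1 : ∀ v, fiberCard f v ≠ 1) (hf : ¬IsPairing f) :
    2 * #(univ.image f) < Fintype.card ι := by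
  obtain ⟨v, hv⟩ := not_forall.1 hf
  have hv_mem : v ∈ univ.image f := fiberCard_ne_zero_iff.1 fun h => hv (Or.inl h)
  have two_le : ∀ w ∈ univ.image f, 2 ≤ fiberCard f w := fun w hw => by
    have := fiberCard_ne_zero_iff.2 hw
    have := h1 w
    omega
  calc 2 * #(univ.image f) = ∑ _w ∈ univ.image f, 2 := by rw [sum_const, smul_eq_mul, mul_comm]
    _ < ∑ w ∈ univ.image f, fiberCard f w :=
        sum_lt_sum two_le ⟨v, hv_mem, by have := two_le v hv_mem; have := h1 v; omega⟩
    _ = Fintype.card ι := (card_eq_sum_card_image f univ).symm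

lemma card_filter_card_image_le [DecidableEq ι] [Fintype κ] {r : ℕ} (hr : r ≤ Fintype.card κ) :
    #{f : ι → κ | #(univ.image f) ≤ r} ≤ Fintype.card κ ^ r * r ^ Fintype.card ι := by
  have hsub : ({f : ι → κ | #(univ.image f) ≤ r} : Finset (ι → κ))
      ⊆ (powersetCard r (univ : Finset κ)).biUnion fun T => Fintype.piFinset fun _ => T := by
    intro f hf
    obtain ⟨T, hfT, hT⟩ := exists_superset_card_eq (mem_filter.1 hf).2 hr
    exact mem_biUnion.2 ⟨T, mem_powersetCard_univ.2 hT,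
      Fintype.mem_piFinset.2 fun j => hfT (mem_image_of_mem f (mem_univ j))⟩
  calc #{f : ι → κ | #(univ.image f) ≤ r}
      ≤ ∑ T ∈ powersetCard r (univ : Finset κ), #(Fintype.piFinset fun _ : ι => T) :=
        (card_le_card hsub).trans card_biUnion_le
    _ = (Fintype.card κ).choose r * r ^ Fintype.card ι := by
        rw [sum_congr rfl fun T hT => by
          rw [Fintype.card_piFinset, prod_const, mem_powersetCard_univ.1 hT, card_univ],
          sum_const, card_powersetCard, card_univ, smul_eq_mul]
    _ ≤ Fintype.card κ ^ r * r ^ Fintype.card ι := Nat.mul_le_mul_right _ (Nat.choose_le_pow _ _)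

end Fibers

section

variable {ι κ κ' : Type*} [Fintype ι] [DecidableEq κ']

lemma fiberCard_comp_apply [DecidableEq κ] {e : κ → κ'} (he : e.Injective)
    (f : ι → κ) (v : κ) : fiberCard (e ∘ f) (e v) = fiberCard f v := by
  simp [fiberCard, he.eq_iff]

lemma fiberCard_comp_of_notMem_range {e : κ → κ'} (f : ι → κ)
    {w : κ'} (hw : w ∉ Set.range e) : fiberCard (e ∘ f) w = 0 := by
  simp only [fiberCard, Function.comp_apply, card_eq_zero, filter_eq_empty_iff]
  exact fun j _ h => hw ⟨f j, h⟩

end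

section FinTuples

variable {α : Type*} [DecidableEq α]

lemma fiberCard_insertNth {n : ℕ} (j : Fin (n + 1)) (x : α) (p : Fin n → α) (v : α) :
    fiberCard (Fin.insertNth j x p) v = (if x = v then 1 else 0) + fiberCard p v := by
  simp only [fiberCard, card_filter]
  rw [Fin.sum_univ_succAbove _ j]
  simp [Fin.insertNth_apply_same, Fin.insertNth_apply_succAbove]

lemma fiberCard_cons {n : ℕ} (x : α) (p : Fin n → α) (v : α) :
    fiberCard (Fin.cons x p : Fin (n + 1) → α) v = (if x = v then 1 else 0) + fiberCard p v := by
  rw [← Fin.insertNth_zero', fiberCard_insertNth]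

end FinTuples

section Pairings

def pairCount (m N : ℕ) : ℕ := #{f : Fin m → Fin N | IsPairing f}

variable {m N : ℕ}

-- A pairing of `Fin (m + 2)` is determined by the common value `v` of `0` and its partner
-- `j.succ`, together with a pairing of the remaining `m` points into the other `N` values.
def extendPairing (j : Fin (m + 1)) (v : Fin (N + 1)) (g : Fin m → Fin N) :
    Fin (m + 2) → Fin (N + 1) :=
  Fin.cons v (Fin.insertNth j v (v.succAbove ∘ g))

lemma fiberCard_extendPairing_self (j : Fin (m + 1)) (v : Fin (N + 1)) (g : Fin m → Fin N) :
    fiberCard (extendPairing j v g) v = 2 := by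
  rw [extendPairing, fiberCard_cons, fiberCard_insertNth,
    fiberCard_comp_of_notMem_range g (by simp [Fin.range_succAbove])]
  simp

lemma fiberCard_extendPairing_succAbove (j : Fin (m + 1)) (v : Fin (N + 1)) (g : Fin m → Fin N)
    (z : Fin N) : fiberCard (extendPairing j v g) (v.succAbove z) = fiberCard g z := by
  rw [extendPairing, fiberCard_cons, fiberCard_insertNth,
    fiberCard_comp_apply Fin.succAbove_right_injective, if_neg (Fin.succAbove_ne v z).symm]
  simp

lemma isPairing_extendPairing_iff {j : Fin (m + 1)} {v : Fin (N + 1)} {g : Fin m → Fin N} :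
    IsPairing (extendPairing j v g) ↔ IsPairing g := by
  simp only [IsPairing, Fin.forall_iff_succAbove v, fiberCard_extendPairing_self,
    fiberCard_extendPairing_succAbove]
  simp

lemma extendPairing_injective :
    Function.Injective fun p : Fin (m + 1) × Fin (N + 1) × (Fin m → Fin N) =>
      extendPairing p.1 p.2.1 p.2.2 := by
  rintro ⟨j, v, g⟩ ⟨j', v', g'⟩ h
  simp only at h
  obtain rfl : v = v' := congrFun h 0
  obtain rfl : j = j' := by
    by_contra hj
    obtain ⟨y, rfl⟩ := Fin.exists_succAbove_eq (Ne.symm hj)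
    have := congrFun h (j.succAbove y).succ
    simp [extendPairing, Fin.insertNth_apply_succAbove, Fin.insertNth_apply_same] at this
  obtain rfl : g = g' := funext fun y => by
    simpa [extendPairing, Fin.insertNth_apply_succAbove] using congrFun h (j.succAbove y).succ
  rfl

lemma exists_extendPairing {f : Fin (m + 2) → Fin (N + 1)} (hf : IsPairing f) :
    ∃ j v g, extendPairing j v g = f := by
  set v := f 0
  have hv : fiberCard (Fin.tail f) v = 1 := by
    have h2 : fiberCard f v = 2 :=
      (hf v).resolve_left (fiberCard_ne_zero_iff.2 (mem_image_of_mem f (mem_univ 0)))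
    rw [← Fin.cons_self_tail f, fiberCard_cons, if_pos rfl] at h2
    omega
  obtain ⟨j, hj⟩ := card_eq_one.1 hv
  have hjv : Fin.tail f j = v := by simpa using hj.ge (mem_singleton_self j)
  have hne : ∀ y, Fin.tail f (j.succAbove y) ≠ v := fun y hy =>
    Fin.succAbove_ne j y (mem_singleton.1 (hj ▸ mem_filter.2 ⟨mem_univ _, hy⟩))
  choose g hg using fun y => Fin.exists_succAbove_eq (hne y)
  refine ⟨j, v, g, ?_⟩
  conv_rhs => rw [← Fin.cons_self_tail f, ← Fin.insertNth_self_removeNth j (Fin.tail f)]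
  rw [extendPairing, hjv]
  congr 2
  funext y
  rw [Function.comp_apply, hg, Fin.removeNth_apply]

lemma pairCount_add_two (m N : ℕ) :
    pairCount (m + 2) (N + 1) = (m + 1) * (N + 1) * pairCount m N := by
  have himage : ({f : Fin (m + 2) → Fin (N + 1) | IsPairing f} : Finset _)
      = (univ ×ˢ univ ×ˢ ({g | IsPairing g} : Finset (Fin m → Fin N))).image
          fun p => extendPairing p.1 p.2.1 p.2.2 := by
    ext f
    simp only [mem_filter, mem_univ, true_and, mem_image, mem_product, Prod.exists]
    constructor
    · intro hf
      obtain ⟨j, v, g, rfl⟩ := exists_extendPairing hf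
      exact ⟨j, v, g, isPairing_extendPairing_iff.1 hf, rfl⟩
    · rintro ⟨j, v, g, hg, rfl⟩
      exact isPairing_extendPairing_iff.2 hg
  rw [pairCount, himage, card_image_of_injective _ extendPairing_injective, card_product,
    card_product, card_univ, card_univ, Fintype.card_fin, Fintype.card_fin, pairCount, mul_assoc]

lemma pairCount_zero_left (N : ℕ) : pairCount 0 N = 1 := by
  rw [pairCount, filter_true_of_mem fun f _ v => Or.inl (by simp [fiberCard])]
  simp

lemma pairCount_zero_right (hm : m ≠ 0) : pairCount m 0 = 0 := by
  have : IsEmpty (Fin m → Fin 0) := by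
    obtain ⟨k, rfl⟩ := Nat.exists_eq_succ_of_ne_zero hm
    infer_instance
  rw [pairCount, univ_eq_empty, filter_empty, card_empty]

lemma pairCount_of_odd (N : ℕ) (hm : ¬Even m) : pairCount m N = 0 := by
  rw [pairCount, card_eq_zero, filter_eq_empty_iff]
  exact fun f _ hf => hm (by simpa using hf.even_card)

lemma pairCount_two_mul_mul (k N : ℕ) :
    pairCount (2 * k) N * (2 ^ k * k.factorial) = (2 * k).factorial * N.descFactorial k := by
  induction k generalizing N with
  | zero => simp [pairCount_zero_left]
  | succ k ih =>
    cases N with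
    | zero => simp [pairCount_zero_right]
    | succ N =>
      rw [show 2 * (k + 1) = 2 * k + 2 by ring, pairCount_add_two, Nat.succ_descFactorial_succ,
        Nat.factorial_succ, Nat.factorial_succ, Nat.factorial_succ]
      calc _ = (2 * k + 1) * (N + 1) * (2 * (k + 1))
              * (pairCount (2 * k) N * (2 ^ k * k.factorial)) := by ring
        _ = _ := by rw [ih]; ring

end Pairings

section ProductState

variable {A : Type*} [Ring A] [Algebra ℂ A]

lemma prodState_tprod (φ : A →ₗ[ℂ] ℂ) {N : ℕ} (g : Fin N → A) :
    prodState φ N (PiTensorProduct.tprod ℂ g) = ∏ i, φ (g i) := by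
  simp [prodState]

lemma bPow_one (b : A) (N : ℕ) : bPow b N 1 = ∑ i, elemAt b N i := by
  rw [bPow, powersetCard_one, sum_map]
  simp

lemma elemAt_mul_tprod_pow (b : A) {N : ℕ} (i : Fin N) (n : Fin N → ℕ) :
    elemAt b N i * PiTensorProduct.tprod ℂ (fun v => b ^ n v)
      = PiTensorProduct.tprod ℂ (fun v => b ^ ((if i = v then 1 else 0) + n v)) := by
  rw [elemAt, PiTensorProduct.tprod_mul_tprod]
  congr 1
  funext v
  rcases eq_or_ne i v with rfl | h
  · simp [add_comm 1, pow_succ']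
  · simp [Function.update_of_ne (Ne.symm h), h]

lemma sum_elemAt_pow (b : A) (N m : ℕ) :
    (∑ i, elemAt b N i) ^ m
      = ∑ f : Fin m → Fin N, PiTensorProduct.tprod ℂ (fun v => b ^ fiberCard f v) := by
  induction m with
  | zero =>
    simp only [fiberCard, univ_eq_empty, filter_empty, card_empty, pow_zero]
    rfl
  | succ m ih =>
    rw [pow_succ', ih, sum_mul_sum, ← (Fin.consEquiv fun _ => Fin N).sum_comp,
      Fintype.sum_prod_type]
    simp [Fin.consEquiv, elemAt_mul_tprod_pow, fiberCard_cons]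

end ProductState

def singletonFreeNonPairings (m N : ℕ) : Finset (Fin m → Fin N) :=
  {f | ¬IsPairing f ∧ ∀ v, fiberCard f v ≠ 1}

section Moments

variable {A : Type*} [Ring A] [Algebra ℂ A] {φ : A →ₗ[ℂ] ℂ} {b : A}

lemma prod_map_pow_fiberCard_of_isPairing (hφ1 : φ 1 = 1) (hb2 : φ (b * b) = 1) {m N : ℕ}
    {f : Fin m → Fin N} (hf : IsPairing f) : ∏ v, φ (b ^ fiberCard f v) = 1 :=
  prod_eq_one fun v _ => by rcases hf v with h | h <;> simp [h, sq, hφ1, hb2]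

lemma prodState_sum_elemAt_pow (hφ1 : φ 1 = 1) (hb1 : φ b = 0) (hb2 : φ (b * b) = 1)
    (m N : ℕ) :
    prodState φ N ((∑ i, elemAt b N i) ^ m)
      = pairCount m N + ∑ f ∈ singletonFreeNonPairings m N, ∏ v, φ (b ^ fiberCard f v) := by
  rw [sum_elemAt_pow, map_sum, ← sum_filter_add_sum_filter_not _ IsPairing]
  simp only [prodState_tprod]
  congr 1
  · rw [sum_congr rfl fun f hf =>
      prod_map_pow_fiberCard_of_isPairing hφ1 hb2 (mem_filter.1 hf).2, sum_const, nsmul_one,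
      pairCount]
  · rw [singletonFreeNonPairings, ← filter_filter]
    refine (sum_filter_of_ne fun f _ hf v hv => hf ?_).symm
    exact prod_eq_zero (mem_univ v) (by rw [hv, pow_one, hb1])

lemma exists_norm_map_pow_le (hφ1 : φ 1 = 1) (b : A) (m : ℕ) :
    ∃ M : ℝ, 0 ≤ M ∧ ∀ k ≤ m, ‖φ (b ^ k)‖ ≤ M ^ k := by
  have hM1 : 1 ≤ 1 + ∑ k ∈ range (m + 1), ‖φ (b ^ k)‖ :=
    le_add_of_nonneg_right (sum_nonneg fun _ _ => norm_nonneg _)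
  refine ⟨_, zero_le_one.trans hM1, fun k hk => ?_⟩
  have hle : ‖φ (b ^ k)‖ ≤ ∑ k ∈ range (m + 1), ‖φ (b ^ k)‖ :=
    single_le_sum (f := fun k => ‖φ (b ^ k)‖) (fun _ _ => norm_nonneg _)
      (mem_range.2 (Nat.lt_succ_of_le hk))
  rcases Nat.eq_zero_or_pos k with rfl | hk0
  · simp [hφ1]
  · exact (hle.trans (le_add_of_nonneg_left zero_le_one)).trans (le_self_pow₀ hM1 hk0.ne')

lemma exists_norm_sum_singletonFreeNonPairings_le (hφ1 : φ 1 = 1) (b : A) (m : ℕ) :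
    ∃ C : ℝ, ∀ N ≥ (m - 1) / 2,
      ‖∑ f ∈ singletonFreeNonPairings m N, ∏ v, φ (b ^ fiberCard f v)‖
        ≤ C * N ^ ((m - 1) / 2) := by
  set r := (m - 1) / 2
  obtain ⟨M, hM0, hM⟩ := exists_norm_map_pow_le hφ1 b m
  refine ⟨r ^ m * M ^ m, fun N hN => ?_⟩
  have hterm : ∀ f : Fin m → Fin N, ‖∏ v, φ (b ^ fiberCard f v)‖ ≤ M ^ m := fun f => by
    calc ‖∏ v, φ (b ^ fiberCard f v)‖ ≤ ∏ v, M ^ fiberCard f v := by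
          rw [norm_prod]
          exact prod_le_prod (fun _ _ => norm_nonneg _)
            fun v _ => hM _ ((fiberCard_le f v).trans_eq (Fintype.card_fin m))
      _ = M ^ m := by rw [prod_pow_eq_pow_sum, sum_fiberCard, Fintype.card_fin]
  have hcard : #(singletonFreeNonPairings m N) ≤ N ^ r * r ^ m := by
    have hrN : r ≤ Fintype.card (Fin N) := hN.trans_eq (Fintype.card_fin N).symm
    refine (card_le_card fun f hf => ?_).trans
      (by simpa using card_filter_card_image_le (ι := Fin m) hrN)
    obtain ⟨hnp, h1⟩ := (mem_filter.1 hf).2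
    have := two_mul_card_image_lt_of_not_isPairing h1 hnp
    exact mem_filter.2 ⟨mem_univ f, by rw [Fintype.card_fin] at this; omega⟩
  calc _ ≤ ∑ f ∈ singletonFreeNonPairings m N, M ^ m :=
        (norm_sum_le _ _).trans (sum_le_sum fun f _ => hterm f)
    _ ≤ (N ^ r * r ^ m : ℕ) * M ^ m := by
        rw [sum_const, nsmul_eq_mul]
        exact mul_le_mul_of_nonneg_right (by exact_mod_cast hcard) (pow_nonneg hM0 m)
    _ = r ^ m * M ^ m * N ^ r := by push_cast; ring

end Moments

section Limits

lemma tendsto_descFactorial_div_pow (k : ℕ) :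
    Tendsto (fun N : ℕ => (N.descFactorial k : ℂ) / (N : ℂ) ^ k) atTop (𝓝 1) := by
  have hz : ∀ᶠ N : ℕ in atTop, (N : ℝ) ^ k ≠ 0 :=
    eventually_atTop.2 ⟨1, fun N hN => pow_ne_zero k (Nat.cast_ne_zero.2 (by omega))⟩
  have h := (Asymptotics.isEquivalent_iff_tendsto_one hz).1 (isEquivalent_descFactorial k)
  refine ((Complex.continuous_ofReal.tendsto 1).comp h).congr fun N => ?_
  simp

lemma inv_sqrt_pow_two_mul (N k : ℕ) :
    (((√N : ℝ) : ℂ)⁻¹) ^ (2 * k) = ((N : ℂ) ^ k)⁻¹ := by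
  rw [pow_mul, inv_pow, ← Complex.ofReal_pow, Real.sq_sqrt N.cast_nonneg, Complex.ofReal_natCast,
    inv_pow]

lemma tendsto_inv_sqrt_pow_mul_pairCount (m : ℕ) :
    Tendsto (fun N : ℕ => (((√N : ℝ) : ℂ)⁻¹) ^ m * pairCount m N) atTop
      (𝓝 (if Even m then (m.factorial : ℂ) / (2 ^ (m / 2) * (m / 2).factorial) else 0)) := by
  split_ifs with hm
  · obtain ⟨k, rfl⟩ := hm
    rw [← two_mul, Nat.mul_div_cancel_left k two_pos]
    have hc : (2 : ℂ) ^ k * k.factorial ≠ 0 := by positivity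
    convert (tendsto_descFactorial_div_pow k).const_mul
      ((2 * k).factorial / (2 ^ k * k.factorial) : ℂ) using 2 with N
    · have hcount : (pairCount (2 * k) N : ℂ)
          = (2 * k).factorial * N.descFactorial k / (2 ^ k * k.factorial) := by
        rw [eq_div_iff hc]
        exact_mod_cast pairCount_two_mul_mul k N
      rw [inv_sqrt_pow_two_mul, hcount]
      field_simp
    · rw [mul_one]
  · simp [pairCount_of_odd _ hm]

lemma tendsto_inv_sqrt_pow_mul_of_norm_le {E : ℕ → ℂ} {C : ℝ} {r m : ℕ} (hrm : 2 * r < m)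
    (hE : ∀ᶠ N in atTop, ‖E N‖ ≤ C * N ^ r) :
    Tendsto (fun N : ℕ => (((√N : ℝ) : ℂ)⁻¹) ^ m * E N) atTop (𝓝 0) := by
  have hdecay : Tendsto (fun N : ℕ => C * (√N)⁻¹) atTop (𝓝 0) := by
    simpa using (tendsto_inv_atTop_zero.comp
      (Real.tendsto_sqrt_atTop.comp tendsto_natCast_atTop_atTop)).const_mul C
  refine squeeze_zero_norm' ?_ hdecay
  filter_upwards [hE, eventually_ge_atTop 1] with N hN hN1
  have hs : 1 ≤ √(N : ℝ) := Real.one_le_sqrt.2 (by exact_mod_cast hN1)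
  have hsr : √(N : ℝ) ^ (2 * r) = N ^ r := by rw [pow_mul, Real.sq_sqrt N.cast_nonneg]
  calc ‖(((√N : ℝ) : ℂ)⁻¹) ^ m * E N‖ = (√N)⁻¹ ^ m * ‖E N‖ := by
        rw [norm_mul, norm_pow, norm_inv, Complex.norm_real, Real.norm_of_nonneg (by positivity)]
    _ ≤ (√N)⁻¹ ^ (2 * r + 1) * (C * N ^ r) :=
        mul_le_mul (pow_le_pow_of_le_one (by positivity) (inv_le_one_of_one_le₀ hs) hrm)
          hN (norm_nonneg _) (by positivity)
    _ = C * (√N)⁻¹ := by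
        rw [pow_succ, inv_pow, ← hsr]
        field_simp

end Limits

theorem commutative_central_limit_theorem_general
    {A : Type*} [Ring A] [Algebra ℂ A]
    (φ : A →ₗ[ℂ] ℂ) (hφ_unital : φ 1 = 1)
    (b : A) (hb1 : φ b = 0) (hb2 : φ (b * b) = 1)
    (m : ℕ) (hm : 1 ≤ m) :
    Tendsto
      (fun N : ℕ =>
        prodState φ N ((((Real.sqrt N : ℝ) : ℂ)⁻¹ • bPow b N 1) ^ m))
      atTop
      (𝓝 (if Even m then (m.factorial : ℂ) / (2 ^ (m / 2) * (m / 2).factorial)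
          else 0)) := by
  obtain ⟨C, hC⟩ := exists_norm_sum_singletonFreeNonPairings_le hφ_unital b m
  have herr := tendsto_inv_sqrt_pow_mul_of_norm_le (by omega : 2 * ((m - 1) / 2) < m)
    (eventually_atTop.2 ⟨_, hC⟩)
  have hlim := (tendsto_inv_sqrt_pow_mul_pairCount m).add herr
  rw [add_zero] at hlim
  refine hlim.congr fun N => ?_
  rw [bPow_one, smul_pow, map_smul, prodState_sum_elemAt_pow hφ_unital hb1 hb2, smul_eq_mul,
    mul_add]

/-- **Commutative central limit theorem** (Theorem 3.2). For a self-adjoint element `b`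
of an algebraic probability space `(A, φ)` with `φ(b) = 0` and `φ(b²) = 1`, the sums
`b^{(N,1)}/√N` converge in moments (w.r.t. the product states `φ^{⊗N}`) to a standard
Gaussian: the `m`-th moments converge to `0` for `m` odd and to `(2k)!/(2^k k!)` for
`m = 2k` even. -/
theorem commutative_central_limit_theorem
    {A : Type*} [Ring A] [Algebra ℂ A] [StarRing A] [StarModule ℂ A]
    (φ : A →ₗ[ℂ] ℂ) (hφ_unital : φ 1 = 1) (hφ_pos : ∀ a, 0 ≤ φ (star a * a))
    (b : A) (hb : star b = b) (hb1 : φ b = 0) (hb2 : φ (b * b) = 1)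
    (m : ℕ) (hm : 1 ≤ m) :
    Tendsto
      (fun N : ℕ =>
        prodState φ N ((((Real.sqrt N : ℝ) : ℂ)⁻¹ • bPow b N 1) ^ m))
      atTop
      (𝓝 (if Even m then (m.factorial : ℂ) / (2 ^ (m / 2) * (m / 2).factorial)
          else 0)) :=
  commutative_central_limit_theorem_general φ hφ_unital b hb1 hb2 m hm
end
end

section
/- Let A be a unital *-algebra over ℂ and b ∈ A. For N ≥ 1 and i ∈ {1,…,N} let b(i) = 1⊗…⊗b⊗…⊗1 ∈ A^{⊗N}, b^{(N,n)} = Σ_{1 ≤ i_1 < … < i_n ≤ N} b(i_1)···b(i_n) for 1 ≤ n ≤ N (with b^{(N,0)} = 1), and let F^{(N,n)}(y) be the sum, over all ways to choose n distinct tensor positions and to place y at one of them and b at the other n−1 (with 1 elsewhere), of the corresponding elementary tensors. Then for 1 ≤ n < N the following identity holds in A^{⊗N}: b^{(N,1)} · b^{(N,n)} = (n+1)·b^{(N,n+1)} + (N−n+1)·b^{(N,n−1)} + F^{(N,n)}(b²−1). -/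
open scoped TensorProduct ComplexOrder
open Filter Topology

noncomputable section

/-!
Write `b(s)` (`elemOn b s`) for the elementary tensor with `b` on the positions in `s` and `1`
elsewhere, so that `b^{(N,n)} = ∑_{|s| = n} b(s)`. Multiplying `b(s)` by `b(i)` gives
`b(s ∪ {i})` when `i ∉ s`; when `i ∈ s` the slot `i` carries `b² = (b² - 1) + 1`, giving the
`F`-term plus `b(s \ {i})`. Summing over `|s| = n`, every `(n+1)`-set arises from `n + 1` pairs
`(s, i)` by insertion and every `(n-1)`-set from `N - n + 1` pairs by erasure: both counts are
one double counting of flags `i ∈ t` with `|t| = n + 1`.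
-/

namespace Finset

variable {α M : Type*} [Fintype α] [DecidableEq α] [AddCommMonoid M]

theorem sum_powersetCard_succ_sum_mem (n : ℕ) (G : Finset α → α → M) :
    ∑ t ∈ powersetCard (n + 1) univ, ∑ i ∈ t, G t i =
      ∑ s ∈ powersetCard n univ, ∑ i ∈ sᶜ, G (insert i s) i := by
  rw [sum_sigma', sum_sigma']
  refine sum_nbij' (fun p => ⟨p.1.erase p.2, p.2⟩) (fun q => ⟨insert q.2 q.1, q.2⟩)
    ?_ ?_ ?_ ?_ ?_ <;>
  · rintro ⟨_, _⟩ h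
    simp_all [card_erase_of_mem, card_insert_of_notMem]

theorem sum_powersetCard_sum_compl_insert (n : ℕ) (f : Finset α → M) :
    ∑ s ∈ powersetCard n univ, ∑ i ∈ sᶜ, f (insert i s) =
      (n + 1) • ∑ t ∈ powersetCard (n + 1) univ, f t := by
  rw [← sum_powersetCard_succ_sum_mem n fun t _ => f t, smul_sum]
  refine sum_congr rfl fun t ht => ?_
  rw [sum_const, (mem_powersetCard_univ.mp ht)]

theorem sum_powersetCard_succ_sum_erase (n : ℕ) (f : Finset α → M) :
    ∑ t ∈ powersetCard (n + 1) univ, ∑ i ∈ t, f (t.erase i) =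
      (Fintype.card α - n) • ∑ s ∈ powersetCard n univ, f s := by
  rw [sum_powersetCard_succ_sum_mem, smul_sum]
  refine sum_congr rfl fun s hs => ?_
  have hs' : s.card = n := mem_powersetCard_univ.mp hs
  rw [← hs', ← card_compl, ← sum_const]
  refine sum_congr rfl fun i hi => ?_
  rw [erase_insert (mem_compl.mp hi)]

end Finset

section

variable {A : Type*} [Ring A] [Algebra ℂ A] {N : ℕ}

def elemOn (b : A) (s : Finset (Fin N)) : ⨂[ℂ] _ : Fin N, A :=
  PiTensorProduct.tprod ℂ fun j => if j ∈ s then b else 1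

theorem list_prod_map_elemAt (b : A) {l : List (Fin N)} (hl : l.Nodup) :
    (l.map (elemAt b N)).prod = elemOn b l.toFinset := by
  induction l with
  | nil => rfl
  | cons i l ih =>
    obtain ⟨hi, hl⟩ := List.nodup_cons.mp hl
    rw [List.map_cons, List.prod_cons, ih hl, elemAt, elemOn, elemOn,
      PiTensorProduct.tprod_mul_tprod]
    congr 1
    funext j
    by_cases hji : j = i
    · subst hji; simp [hi]
    · simp [hji]

theorem bPow_eq_sum_elemOn (b : A) (n : ℕ) :
    bPow b N n = ∑ s ∈ Finset.powersetCard n Finset.univ, elemOn b s := by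
  refine Finset.sum_congr rfl fun s _ => ?_
  rw [list_prod_map_elemAt b (s.sort_nodup _), Finset.sort_toFinset]

theorem bPow_one_eq_sum_elemOn_singleton (b : A) :
    bPow b N 1 = ∑ i, elemOn b {i} := by
  rw [bPow_eq_sum_elemOn, Finset.powersetCard_one, Finset.sum_map]
  rfl

theorem elemOn_singleton_mul_of_notMem (b : A) {s : Finset (Fin N)} {i : Fin N} (hi : i ∉ s) :
    elemOn b {i} * elemOn b s = elemOn b (insert i s) := by
  rw [elemOn, elemOn, elemOn, PiTensorProduct.tprod_mul_tprod]
  congr 1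
  funext j
  by_cases hji : j = i
  · subst hji; simp [hi]
  · simp [hji]

theorem elemOn_singleton_mul_of_mem (b : A) {s : Finset (Fin N)} {i : Fin N} (hi : i ∈ s) :
    elemOn b {i} * elemOn b s =
      PiTensorProduct.tprod ℂ (fun j => if j = i then b * b - 1 else if j ∈ s then b else 1) +
        elemOn b (s.erase i) := by
  have hupdate : ∀ y : A, (fun j => if j = i then y else if j ∈ s then b else 1) =
      Function.update (fun j => if j ∈ s then b else 1) i y := by
    intro y
    funext j
    by_cases hji : j = i
    · subst hji; simp
    · simp [hji]
  have herase : elemOn b (s.erase i) = PiTensorProduct.tprod ℂ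
      (fun j => if j = i then 1 else if j ∈ s then b else 1) := by
    rw [elemOn]
    congr 1
    funext j
    by_cases hji : j = i <;> simp [hji]
  rw [herase, hupdate, hupdate, ← MultilinearMap.map_update_add, sub_add_cancel, ← hupdate,
    elemOn, elemOn, PiTensorProduct.tprod_mul_tprod]
  congr 1
  funext j
  by_cases hji : j = i
  · subst hji; simp [hi]
  · simp [hji]

theorem bPow_one_mul_elemOn (b : A) (s : Finset (Fin N)) :
    bPow b N 1 * elemOn b s =
      (∑ i ∈ s, PiTensorProduct.tprod ℂ
          (fun j => if j = i then b * b - 1 else if j ∈ s then b else 1)) +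
        ∑ i ∈ s, elemOn b (s.erase i) + ∑ i ∈ sᶜ, elemOn b (insert i s) := by
  rw [bPow_one_eq_sum_elemOn_singleton, Finset.sum_mul, ← Finset.sum_add_sum_compl s,
    ← Finset.sum_add_distrib]
  congr 1
  · exact Finset.sum_congr rfl fun i hi => elemOn_singleton_mul_of_mem b hi
  · exact Finset.sum_congr rfl fun i hi =>
      elemOn_singleton_mul_of_notMem b (Finset.mem_compl.mp hi)

end

/-- Equation (3.5): for `1 ≤ n < N`,
`b^{(N,1)} b^{(N,n)} = (n+1) b^{(N,n+1)} + (N-n+1) b^{(N,n-1)} + F^{(N,n)}(b² - 1)`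
holds in `A^{⊗N}`. -/
theorem bPow_one_mul_bPow
    {A : Type*} [Ring A] [Algebra ℂ A] (b : A) (N n : ℕ) (hn : 1 ≤ n) (hnN : n < N) :
    bPow b N 1 * bPow b N n =
      (n + 1) • bPow b N (n + 1) + (N - n + 1) • bPow b N (n - 1) +
        Fsum b (b * b - 1) N n := by
  obtain ⟨m, rfl⟩ := Nat.exists_eq_add_of_le' hn
  have hcard : N - (m + 1) + 1 = Fintype.card (Fin N) - m := by
    rw [Fintype.card_fin]; omega
  rw [bPow_eq_sum_elemOn b (m + 1), Finset.mul_sum]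
  simp only [bPow_one_mul_elemOn, Finset.sum_add_distrib,
    Finset.sum_powersetCard_succ_sum_erase, Finset.sum_powersetCard_sum_compl_insert,
    ← bPow_eq_sum_elemOn, Nat.add_sub_cancel, hcard]
  rw [Fsum]
  abel
end
end
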